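/- arXiv:2408.13637 — 10 statements merged into one kernel-verified Lean document; each statement's English description precedes it below -/
import Mathlib

section
/- In a temporal election, a proportional outcome always exists: there is an outcome o (a choice of one project per timestep) such that every agent i gets utility at least ⌊μ_i/n⌋, where μ_i is the number of timesteps at which agent i approves at least one project. -/
/-!
Give each agent `i` exactly `⌊μ_i / n⌋` "seats" and let a seat of `i` be matched to any timestep
at which `i` approves some project. Hall's condition holds: a set of seats belonging to agents
`I` has at most `|I| · max_{i ∈ I} ⌊μ_i / n⌋ ≤ n ⌊μ_{i₀} / n⌋ ≤ μ_{i₀}` elements, and agent `i₀`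
alone already approves at `μ_{i₀}` timesteps. At each matched timestep, select a project approved
by the seat's owner; each agent then collects one unit of utility per seat.
-/

/-- The utility of agent `i` under outcome `o`: the number of timesteps at which
the selected project is approved by `i`. -/
noncomputable def util {P : Type*} {n ℓ : ℕ}
    (S : Fin n → Fin ℓ → Finset P) (i : Fin n) (o : Fin ℓ → P) : ℕ :=
  Nat.card {t : Fin ℓ // o t ∈ S i t}

/-- `μ_i`: the number of timesteps at which agent `i` approves at least one project. -/
noncomputable def mu {P : Type*} {n ℓ : ℕ}
    (S : Fin n → Fin ℓ → Finset P) (i : Fin n) : ℕ :=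
  Nat.card {t : Fin ℓ // S i t ≠ ∅}

open Finset

section HallSigma

variable {ι α : Type*} [Fintype ι] [DecidableEq α] {T : ι → Finset α} {d : ι → ℕ}

theorem card_le_card_biUnion_sigma_of_card_mul_le (hd : ∀ i, Fintype.card ι * d i ≤ #(T i))
    (s : Finset (Σ i, Fin (d i))) : #s ≤ #(s.biUnion fun x => T x.1) := by
  classical
  obtain rfl | hs := s.eq_empty_or_nonempty
  · simp
  set I := s.image Sigma.fst
  obtain ⟨i₀, hi₀, hmax⟩ := I.exists_max_image d (hs.image _)
  obtain ⟨x₀, hx₀, rfl⟩ := mem_image.mp hi₀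
  calc #s ≤ #(I.sigma fun i => (univ : Finset (Fin (d i)))) :=
        card_le_card fun x hx => mem_sigma.mpr ⟨mem_image_of_mem _ hx, mem_univ _⟩
    _ = ∑ i ∈ I, d i := by simp
    _ ≤ #I * d x₀.1 := sum_le_card_nsmul _ _ _ hmax
    _ ≤ Fintype.card ι * d x₀.1 := Nat.mul_le_mul_right _ (card_le_univ I)
    _ ≤ #(T x₀.1) := hd x₀.1
    _ ≤ #(s.biUnion fun x => T x.1) := card_le_card (subset_biUnion_of_mem (fun x => T x.1) hx₀)

theorem exists_injective_sigma_of_card_mul_le (hd : ∀ i, Fintype.card ι * d i ≤ #(T i)) :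
    ∃ f : (Σ i, Fin (d i)) → α, Function.Injective f ∧ ∀ x, f x ∈ T x.1 :=
  (all_card_le_biUnion_card_iff_existsInjective' fun x : Σ i, Fin (d i) => T x.1).mp
    (card_le_card_biUnion_sigma_of_card_mul_le hd)

end HallSigma

section Election

variable {P : Type*} {n ℓ : ℕ} (S : Fin n → Fin ℓ → Finset P)

theorem mu_eq_card_filter_nonempty (i : Fin n) :
    mu S i = #{t | (S i t).Nonempty} := by
  classical
  simp [mu, Nat.card_eq_fintype_card, Fintype.card_subtype, nonempty_iff_ne_empty]

theorem le_util_of_injective {i : Fin n} {o : Fin ℓ → P} {m : ℕ} {g : Fin m → Fin ℓ}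
    (hg : Function.Injective g) (hmem : ∀ k, o (g k) ∈ S i (g k)) : m ≤ util S i o := by
  simpa [util] using
    Nat.card_le_card_of_injective (fun k => (⟨g k, hmem k⟩ : {t // o t ∈ S i t}))
      fun a b hab => hg (congrArg Subtype.val hab)

end Election

theorem prop_outcome_exists_general {P : Type*} [Nonempty P] {n ℓ : ℕ}
    (S : Fin n → Fin ℓ → Finset P) :
    ∃ o : Fin ℓ → P, ∀ i : Fin n, mu S i / n ≤ util S i o := by
  classical
  obtain ⟨f, hf, hfT⟩ := exists_injective_sigma_of_card_mul_le
    (T := fun i => ({t | (S i t).Nonempty} : Finset (Fin ℓ))) (d := fun i => mu S i / n)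
    fun i => by simpa [mu_eq_card_filter_nonempty S i] using Nat.mul_div_le (mu S i) n
  choose pick hpick using fun x => (mem_filter.mp (hfT x)).2
  refine ⟨Function.extend f pick fun _ => Classical.arbitrary P, fun i => ?_⟩
  exact le_util_of_injective S (g := fun k => f ⟨i, k⟩)
    (fun a b hab => eq_of_heq (Sigma.mk.inj_iff.mp (hf hab)).2)
    fun k => by simpa [hf.extend_apply] using hpick ⟨i, k⟩

/-- A proportional (PROP) outcome always exists: some outcome `o` gives every
agent `i` utility at least `⌊μ_i / n⌋`. -/
theorem prop_outcome_exists {P : Type*} [Fintype P] [Nonempty P] {n ℓ : ℕ}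
    (hn : 1 ≤ n) (S : Fin n → Fin ℓ → Finset P) :
    ∃ o : Fin ℓ → P, ∀ i : Fin n, mu S i / n ≤ util S i o :=
  prop_outcome_exists_general S
end

section
/- For every temporal election instance and every outcome o, there exists a proportional outcome o' whose egalitarian welfare is at least that of o; consequently the price of proportionality with respect to egalitarian welfare equals 1. -/
open Finset Function

namespace Finset

variable {ι α : Type*} [DecidableEq α]

theorem exists_pairwiseDisjoint_subset_card_eq_div (T : ι → Finset α) {n : ℕ} (s : Finset ι)
    (hs : #s ≤ n) :
    ∃ B : ι → Finset α, (∀ i, B i ⊆ T i) ∧ (∀ i ∈ s, #(B i) = #(T i) / n) ∧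
      (s : Set ι).PairwiseDisjoint B := by
  classical
  induction s using Finset.strongInduction with
  | _ s ih =>
  rcases s.eq_empty_or_nonempty with rfl | hne
  · exact ⟨fun _ => ∅, fun _ => empty_subset _, by simp, by simp⟩
  -- Serve the index with the largest `#(T i)` last: the blocks of the others have size at most
  -- `q`, so they use at most `(#s - 1) * q` elements, which leaves room for a block of size `q`.
  obtain ⟨i₀, hi₀, hmax⟩ := s.exists_max_image (fun i => #(T i)) hne
  obtain ⟨B, hBT, hBcard, hBdisj⟩ :=
    ih (s.erase i₀) (erase_ssubset hi₀) ((card_le_card (erase_subset i₀ s)).trans hs)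
  set q := #(T i₀) / n
  set U := (s.erase i₀).biUnion B
  have hU : #U ≤ (#s - 1) * q := by
    rw [← card_erase_of_mem hi₀]
    refine card_biUnion_le_card_mul _ _ _ fun j hj => ?_
    rw [hBcard j hj]
    exact Nat.div_le_div_right (hmax j (mem_of_mem_erase hj))
  have hroom : q ≤ #(T i₀ \ U) := by
    have hnq : n * q ≤ #(T i₀) := Nat.mul_div_le _ _
    have hsq : (#s - 1 + 1) * q ≤ n * q := Nat.mul_le_mul_right _ (by have := hne.card_pos; omega)
    rw [add_one_mul] at hsq
    have := le_card_sdiff U (T i₀)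
    omega
  obtain ⟨B₀, hB₀, hB₀card⟩ := exists_subset_card_eq hroom
  refine ⟨Function.update B i₀ B₀, fun i => ?_, fun i hi => ?_, ?_⟩
  · rcases eq_or_ne i i₀ with rfl | h
    · simpa using hB₀.trans sdiff_subset
    · simpa [h] using hBT i
  · rcases eq_or_ne i i₀ with rfl | h
    · simpa using hB₀card
    · simpa [h] using hBcard i (mem_erase.2 ⟨h, hi⟩)
  · rw [← insert_erase hi₀, coe_insert, Set.pairwiseDisjoint_insert]
    refine ⟨hBdisj.mono_on fun j hj => ?_, fun j hj hne => ?_⟩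
    · simp [ne_of_mem_erase hj]
    · rw [Function.update_self, Function.update_of_ne hne.symm]
      exact disjoint_of_subset_left hB₀ (disjoint_sdiff_self_left.mono_right
        (subset_biUnion_of_mem B hj))

theorem exists_card_le_mul_le_card_inter [Fintype ι] (A : ι → Finset α) {m : ℕ}
    (h : ∀ i, m ≤ #(A i)) :
    ∃ K : Finset α, #K ≤ Fintype.card ι * m ∧ ∀ i, m ≤ #(K ∩ A i) := by
  choose C hCA hCcard using fun i => exists_subset_card_eq (h i)
  refine ⟨univ.biUnion C, ?_, fun i => ?_⟩
  · simpa using card_biUnion_le_card_mul univ C m fun i _ => (hCcard i).le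
  · rw [← hCcard i]
    exact card_le_card (subset_inter (subset_biUnion_of_mem C (mem_univ i)) (hCA i))

end Finset

theorem exists_update_mem_of_pairwise_disjoint {ι τ P : Type*} (S : ι → τ → Finset P)
    (o : τ → P) (B : ι → Finset τ) (hB : Pairwise (Disjoint on B))
    (hS : ∀ i, ∀ t ∈ B i, (S i t).Nonempty) :
    ∃ o' : τ → P, (∀ t, (∀ i, t ∉ B i) → o' t = o t) ∧ ∀ i, ∀ t ∈ B i, o' t ∈ S i t := by
  classical
  have hpick : ∀ t, (∃ i, t ∈ B i) → ∃ p, ∀ i, t ∈ B i → p ∈ S i t := by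
    rintro t ⟨i, hi⟩
    obtain ⟨p, hp⟩ := hS i t hi
    refine ⟨p, fun j hj => ?_⟩
    obtain rfl : j = i := by
      by_contra hji
      exact disjoint_left.1 (hB hji) hj hi
    exact hp
  choose pick hpick using hpick
  refine ⟨fun t => if h : ∃ i, t ∈ B i then pick t h else o t, fun t ht => ?_, fun i t ht => ?_⟩
  · simp [not_exists.2 ht]
  · simpa [show ∃ j, t ∈ B j from ⟨i, ht⟩] using hpick t ⟨i, ht⟩ i ht

section TemporalElection

variable {P : Type*} {n ℓ : ℕ} (S : Fin n → Fin ℓ → Finset P)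

open Classical in
noncomputable def satisfiedSteps (i : Fin n) (o : Fin ℓ → P) : Finset (Fin ℓ) :=
  {t | o t ∈ S i t}

open Classical in
noncomputable def activeSteps (i : Fin n) : Finset (Fin ℓ) :=
  {t | (S i t).Nonempty}

theorem util_eq_card_satisfiedSteps (i : Fin n) (o : Fin ℓ → P) :
    util S i o = #(satisfiedSteps S i o) := by
  classical
  simp [util, satisfiedSteps, Nat.card_eq_fintype_card, Fintype.card_subtype]

theorem mu_eq_card_activeSteps (i : Fin n) : mu S i = #(activeSteps S i) := by
  classical
  simp [mu, activeSteps, Nat.card_eq_fintype_card, Fintype.card_subtype,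
    nonempty_iff_ne_empty]

theorem card_le_util {i : Fin n} {o : Fin ℓ → P} {A : Finset (Fin ℓ)}
    (h : ∀ t ∈ A, o t ∈ S i t) : #A ≤ util S i o := by
  rw [util_eq_card_satisfiedSteps]
  exact card_le_card fun t ht => by simpa [satisfiedSteps] using h t ht

theorem exists_card_inter_add_card_sdiff_div_le_util (o : Fin ℓ → P) (K : Finset (Fin ℓ)) :
    ∃ o' : Fin ℓ → P,
      ∀ i, #(K ∩ satisfiedSteps S i o) + #(activeSteps S i \ K) / n ≤ util S i o' := by
  obtain ⟨B, hBsub, hBcard, hBdisj⟩ :=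
    exists_pairwiseDisjoint_subset_card_eq_div (fun i => activeSteps S i \ K) (n := n) univ (by simp)
  rw [coe_univ, Set.PairwiseDisjoint, Set.pairwise_univ] at hBdisj
  have hBK : ∀ i, Disjoint (B i) K := fun i => disjoint_of_subset_left (hBsub i) sdiff_disjoint
  obtain ⟨o', ho'_eq, ho'_mem⟩ := exists_update_mem_of_pairwise_disjoint S o B hBdisj
    fun i t ht => by simpa [activeSteps] using (mem_sdiff.1 (hBsub i ht)).1
  refine ⟨o', fun i => ?_⟩
  have hdisj : Disjoint (K ∩ satisfiedSteps S i o) (B i) :=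
    (hBK i).symm.mono_left inter_subset_left
  rw [← hBcard i (mem_univ i), ← card_union_of_disjoint hdisj]
  refine card_le_util S fun t ht => ?_
  rcases mem_union.1 ht with ht | ht
  · obtain ⟨htK, hto⟩ := mem_inter.1 ht
    rw [ho'_eq t fun j htj => disjoint_left.1 (hBK j) htj htK]
    simpa [satisfiedSteps] using hto
  · exact ho'_mem i t ht

end TemporalElection

theorem prop_preserves_egal_general {P : Type*} {n ℓ : ℕ}
    (hn : 1 ≤ n) (S : Fin n → Fin ℓ → Finset P) (o : Fin ℓ → P) :
    ∃ o' : Fin ℓ → P,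
      (∀ i : Fin n, mu S i / n ≤ util S i o') ∧
      (Finset.univ.inf' (Finset.univ_nonempty_iff.mpr (Fin.pos_iff_nonempty.mp hn))
          (fun j => util S j o) ≤
        Finset.univ.inf' (Finset.univ_nonempty_iff.mpr (Fin.pos_iff_nonempty.mp hn))
          (fun j => util S j o')) := by
  set m := univ.inf' (univ_nonempty_iff.mpr (Fin.pos_iff_nonempty.mp hn)) fun j => util S j o
  obtain ⟨K, hKcard, hK⟩ := exists_card_le_mul_le_card_inter (satisfiedSteps S · o) (m := m)
    fun i => util_eq_card_satisfiedSteps S i o ▸ inf'_le _ (mem_univ i)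
  obtain ⟨o', ho'⟩ := exists_card_inter_add_card_sdiff_div_le_util S o K
  refine ⟨o', fun i => ?_, le_inf' _ _ fun i _ => (hK i).trans (le_self_add.trans (ho' i))⟩
  have hmu : mu S i ≤ #(activeSteps S i \ K) + n * #(K ∩ satisfiedSteps S i o) := by
    rw [mu_eq_card_activeSteps]
    refine card_le_card_sdiff_add_card.trans (Nat.add_le_add_left ?_ _)
    exact (Fintype.card_fin n ▸ hKcard).trans (Nat.mul_le_mul_left n (hK i))
  calc mu S i / n ≤ (#(activeSteps S i \ K) + n * #(K ∩ satisfiedSteps S i o)) / n :=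
        Nat.div_le_div_right hmu
    _ = #(K ∩ satisfiedSteps S i o) + #(activeSteps S i \ K) / n := by
        rw [Nat.add_mul_div_left _ _ hn, add_comm]
    _ ≤ util S i o' := ho' i

/-- For every outcome `o` there exists a proportional outcome `o'` whose
egalitarian welfare (minimum utility) is at least that of `o`; consequently the
price of proportionality for egalitarian welfare is 1. -/
theorem prop_preserves_egal {P : Type*} [Fintype P] [Nonempty P] {n ℓ : ℕ}
    (hn : 1 ≤ n) (S : Fin n → Fin ℓ → Finset P) (o : Fin ℓ → P) :
    ∃ o' : Fin ℓ → P,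
      (∀ i : Fin n, mu S i / n ≤ util S i o') ∧
      (Finset.univ.inf' (Finset.univ_nonempty_iff.mpr (Fin.pos_iff_nonempty.mp hn))
          (fun j => util S j o) ≤
        Finset.univ.inf' (Finset.univ_nonempty_iff.mpr (Fin.pos_iff_nonempty.mp hn))
          (fun j => util S j o')) :=
  prop_preserves_egal_general hn S o
end

section
/- Suppose every agent satisfies ⌊μ_i/n⌋ ≥ 1. Then for any proportional outcome o, the utilitarian welfare of o is at least a 1/(2n−1) fraction of the maximum possible utilitarian welfare, i.e., Σ_i u_i(o) ≥ (Σ_i μ_i)/(2n−1). -/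
/-!
Each agent loses less than one block of `n` timesteps to rounding:
`μ_i ≤ n ⌊μ_i/n⌋ + (n - 1)`, and since `⌊μ_i/n⌋ ≥ 1` the remainder `n - 1` is at most
`(n - 1) ⌊μ_i/n⌋`. Hence `μ_i ≤ (2n - 1) ⌊μ_i/n⌋ ≤ (2n - 1) u_i(o)`, and summing over the
agents gives the bound.
-/

theorem Nat.le_two_mul_sub_one_mul_div {m n : ℕ} (h : 1 ≤ m / n) :
    m ≤ (2 * n - 1) * (m / n) := by
  have hn : 0 < n := Nat.pos_of_ne_zero (by rintro rfl; simp at h)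
  have hm : m < n * (m / n + 1) := Nat.lt_mul_div_succ m hn
  have hrem : n - 1 ≤ (n - 1) * (m / n) := Nat.le_mul_of_pos_right _ h
  calc m ≤ n * (m / n) + (n - 1) := by rw [Nat.mul_succ] at hm; omega
    _ ≤ n * (m / n) + (n - 1) * (m / n) := by gcongr
    _ = (2 * n - 1) * (m / n) := by rw [← Nat.add_mul]; congr 1; omega

theorem prop_util_bound_general {P : Type*} {n ℓ : ℕ}
    (S : Fin n → Fin ℓ → Finset P)
    (hmu : ∀ i : Fin n, 1 ≤ mu S i / n)
    (o : Fin ℓ → P)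
    (hprop : ∀ i : Fin n, mu S i / n ≤ util S i o) :
    ((∑ i : Fin n, mu S i : ℕ) : ℚ) / ((2 * n - 1 : ℕ) : ℚ) ≤
      ((∑ i : Fin n, util S i o : ℕ) : ℚ) := by
  have hagent (i : Fin n) : mu S i ≤ util S i o * (2 * n - 1) :=
    calc mu S i ≤ (2 * n - 1) * (mu S i / n) := Nat.le_two_mul_sub_one_mul_div (hmu i)
      _ ≤ util S i o * (2 * n - 1) := by rw [mul_comm]; gcongr; exact hprop i
  have hwelfare : ∑ i, mu S i ≤ (∑ i, util S i o) * (2 * n - 1) := by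
    rw [Finset.sum_mul]
    exact Finset.sum_le_sum fun i _ => hagent i
  exact div_le_of_le_mul₀ (by positivity) (by positivity) (by exact_mod_cast hwelfare)

/-- If every agent satisfies `⌊μ_i/n⌋ ≥ 1`, then any proportional outcome `o` has
utilitarian welfare at least a `1/(2n−1)` fraction of the maximum possible
utilitarian welfare: `Σ_i u_i(o) ≥ (Σ_i μ_i)/(2n−1)`. -/
theorem prop_util_bound {P : Type*} {n ℓ : ℕ} (hn : 1 ≤ n)
    (S : Fin n → Fin ℓ → Finset P)
    (hmu : ∀ i : Fin n, 1 ≤ mu S i / n)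
    (o : Fin ℓ → P)
    (hprop : ∀ i : Fin n, mu S i / n ≤ util S i o) :
    ((∑ i : Fin n, mu S i : ℕ) : ℚ) / ((2 * n - 1 : ℕ) : ℚ) ≤
      ((∑ i : Fin n, util S i o : ℕ) : ℚ) :=
  prop_util_bound_general S hmu o hprop
end

section
/- Suppose every agent satisfies ⌊μ_i/n⌋ ≥ 1. Then for any proportional outcome o, the egalitarian welfare of o is at least a 1/(2n−1) fraction of the maximum possible egalitarian welfare: min_i u_i(o) ≥ (min_i μ_i)/(2n−1). -/
theorem Nat.le_div_mul_two_mul_sub_one {m n : ℕ} (h : 1 ≤ m / n) : m ≤ m / n * (2 * n - 1) := by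
  have hn : 0 < n := Nat.pos_of_ne_zero fun h0 => by simp [h0] at h
  have hrem : m % n ≤ (n - 1) * (m / n) :=
    (Nat.le_sub_one_of_lt (Nat.mod_lt m hn)).trans (Nat.le_mul_of_pos_right _ h)
  calc m = n * (m / n) + m % n := (Nat.div_add_mod m n).symm
    _ ≤ n * (m / n) + (n - 1) * (m / n) := Nat.add_le_add_left hrem _
    _ = m / n * (2 * n - 1) := by rw [← Nat.add_mul, Nat.mul_comm]; congr 1; omega

theorem Finset.inf'_le_apply_inf' {ι α β : Type*} [SemilatticeInf α] [LinearOrder β]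
    {s : Finset ι} (hs : s.Nonempty) {f : ι → α} {g : ι → β} (φ : β → α)
    (h : ∀ i ∈ s, f i ≤ φ (g i)) : s.inf' hs f ≤ φ (s.inf' hs g) := by
  obtain ⟨i, hi, hgi⟩ := s.exists_mem_eq_inf' hs g
  rw [hgi]
  exact (s.inf'_le f hi).trans (h i hi)

theorem mu_le_util_mul {P : Type*} {n ℓ : ℕ} (S : Fin n → Fin ℓ → Finset P) (o : Fin ℓ → P)
    (i : Fin n) (hmu : 1 ≤ mu S i / n) (hprop : mu S i / n ≤ util S i o) :
    mu S i ≤ util S i o * (2 * n - 1) :=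
  (Nat.le_div_mul_two_mul_sub_one hmu).trans (Nat.mul_le_mul_right _ hprop)

/-- If every agent satisfies `⌊μ_i/n⌋ ≥ 1`, then any proportional outcome `o` has
egalitarian welfare at least a `1/(2n−1)` fraction of the maximum possible
egalitarian welfare: `min_i u_i(o) ≥ (min_i μ_i)/(2n−1)`. -/
theorem prop_egal_bound {P : Type*} {n ℓ : ℕ} (hn : 1 ≤ n)
    (S : Fin n → Fin ℓ → Finset P)
    (hmu : ∀ i : Fin n, 1 ≤ mu S i / n)
    (o : Fin ℓ → P)
    (hprop : ∀ i : Fin n, mu S i / n ≤ util S i o) :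
    ((Finset.univ.inf' (Finset.univ_nonempty_iff.mpr (Fin.pos_iff_nonempty.mp hn))
        (fun i => mu S i) : ℕ) : ℚ) / ((2 * n - 1 : ℕ) : ℚ) ≤
      ((Finset.univ.inf' (Finset.univ_nonempty_iff.mpr (Fin.pos_iff_nonempty.mp hn))
        (fun i => util S i o) : ℕ) : ℚ) := by
  have hpos : (0 : ℚ) < ((2 * n - 1 : ℕ) : ℚ) := by exact_mod_cast (by omega : 0 < 2 * n - 1)
  rw [div_le_iff₀ hpos, ← Nat.cast_mul, Nat.cast_le]
  exact Finset.inf'_le_apply_inf' _ (· * (2 * n - 1))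
    fun i _ => mu_le_util_mul S o i (hmu i) (hprop i)
end

section
/- For the lower bound on the price of proportionality with respect to utilitarian welfare: for every integer k ≥ 2, with n = k², there is an instance with n agents and n timesteps in which the maximum utilitarian welfare is n·k, while every proportional outcome has utilitarian welfare at most n − k + k²; hence the ratio is at least n/(2√n − 1). -/
/-- Lower-bound instance for the price of proportionality w.r.t. utilitarian
welfare: for `k ≥ 2` and `n = k²` agents and timesteps, projects `p_0,…,p_{n−k}`,
with agent `i` (for `i < n−k`, zero-indexed) approving `p_{i+1}` always and all
other agents approving `p_0` always: (a) every outcome has utilitarian welfare at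
most `n·k`, achieved by some outcome; (b) every proportional outcome has
utilitarian welfare at most `n − k + k²`; (c) `(n·k)/(n−k+k²) = n/(2k−1)`,
i.e. `n/(2√n − 1)`. -/
theorem poprop_util_lower (k n : ℕ) (hk : 2 ≤ k) (hn : n = k * k)
    (S : Fin n → Fin n → Finset (Fin (n - k + 1)))
    (hS : ∀ (i : Fin n) (t : Fin n), S i t =
      if h : (i : ℕ) < n - k then {⟨(i : ℕ) + 1, by omega⟩} else {⟨0, by omega⟩}) :
    (∀ o : Fin n → Fin (n - k + 1), ∑ i : Fin n, util S i o ≤ n * k) ∧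
    (∃ o : Fin n → Fin (n - k + 1), ∑ i : Fin n, util S i o = n * k) ∧
    (∀ o : Fin n → Fin (n - k + 1), (∀ i : Fin n, mu S i / n ≤ util S i o) →
      ∑ i : Fin n, util S i o ≤ n - k + k * k) ∧
    ((n * k : ℚ) / ((n - k + k * k : ℕ) : ℚ) = (n : ℚ) / (2 * k - 1)) := by
  classical
  have hkn : k ≤ n := by nlinarith
  have hn0 : 0 < n := by nlinarith
  -- the unique project approved by agent i
  set tgt : Fin n → Fin (n - k + 1) := fun i =>
    if h : (i : ℕ) < n - k then ⟨(i : ℕ) + 1, by omega⟩ else ⟨0, by omega⟩ with htgt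
  have hmem : ∀ (i t : Fin n) (p : Fin (n - k + 1)), p ∈ S i t ↔ p = tgt i := by
    intro i t p
    rw [hS, htgt]
    by_cases h : (i : ℕ) < n - k <;> simp [h]
  have hutil : ∀ (i : Fin n) (o : Fin n → Fin (n - k + 1)),
      util S i o = (Finset.univ.filter (fun t => o t = tgt i)).card := by
    intro i o
    rw [util, Nat.card_eq_fintype_card]
    rw [Fintype.card_subtype]
    congr 1
    ext t
    simp [hmem]
  -- swap the double sum
  have hsum : ∀ o : Fin n → Fin (n - k + 1),
      ∑ i : Fin n, util S i o
        = ∑ t : Fin n, (Finset.univ.filter (fun i : Fin n => tgt i = o t)).card := by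
    intro o
    simp only [hutil, Finset.card_filter]
    rw [Finset.sum_comm]
    apply Finset.sum_congr rfl
    intro t _
    apply Finset.sum_congr rfl
    intro i _
    by_cases h : o t = tgt i
    · simp [h]
    · simp [h, Ne.symm h]
  -- count agents per project
  have hcount : ∀ p : Fin (n - k + 1),
      (Finset.univ.filter (fun i : Fin n => tgt i = p)).card
        = if (p : ℕ) = 0 then k else 1 := by
    intro p
    by_cases hp : (p : ℕ) = 0
    · rw [if_pos hp]
      have he : Finset.univ.filter (fun i : Fin n => tgt i = p)
          = Finset.univ.filter (fun i : Fin n => n - k ≤ (i : ℕ)) := by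
        ext i
        simp only [Finset.mem_filter, Finset.mem_univ, true_and, htgt]
        by_cases h : (i : ℕ) < n - k <;> simp [h, Fin.ext_iff, hp] <;> omega
      rw [he, Finset.card_filter,
        Fin.sum_univ_eq_sum_range (fun j => if n - k ≤ j then 1 else 0) n,
        ← Finset.card_filter]
      have h2 : (Finset.range n).filter (fun i => n - k ≤ i) = Finset.Ico (n - k) n := by
        ext a
        simp only [Finset.mem_filter, Finset.mem_range, Finset.mem_Ico]
        omega
      rw [h2, Nat.card_Ico]
      omega
    · rw [if_neg hp]
      have hplt : (p : ℕ) - 1 < n - k := by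
        have := p.isLt
        omega
      have he : Finset.univ.filter (fun i : Fin n => tgt i = p)
          = {(⟨(p : ℕ) - 1, by omega⟩ : Fin n)} := by
        ext i
        simp only [Finset.mem_filter, Finset.mem_univ, true_and, Finset.mem_singleton, htgt]
        by_cases h : (i : ℕ) < n - k <;> simp [h, Fin.ext_iff] <;> omega
      rw [he, Finset.card_singleton]
  -- welfare as a sum of weights over timesteps
  have hsum' : ∀ o : Fin n → Fin (n - k + 1),
      ∑ i : Fin n, util S i o = ∑ t : Fin n, (if ((o t : ℕ)) = 0 then k else 1) := by
    intro o
    rw [hsum o]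
    exact Finset.sum_congr rfl fun t _ => hcount (o t)
  refine ⟨?_, ?_, ?_, ?_⟩
  · -- (a) upper bound
    intro o
    rw [hsum' o]
    calc ∑ t : Fin n, (if ((o t : ℕ)) = 0 then k else 1)
        ≤ ∑ _t : Fin n, k := by
          apply Finset.sum_le_sum
          intro t _
          split <;> omega
      _ = n * k := by simp [Finset.sum_const, mul_comm]
  · -- achieved by the constant-0 outcome
    refine ⟨fun _ => ⟨0, by omega⟩, ?_⟩
    rw [hsum']
    simp [Finset.sum_const, mul_comm]
  · -- (b) proportional outcomes
    intro o hpr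
    -- mu = n, so proportionality means util ≥ 1
    have hmu : ∀ i : Fin n, mu S i = n := by
      intro i
      rw [mu, Nat.card_eq_fintype_card, Fintype.card_subtype]
      have : Finset.univ.filter (fun t : Fin n => S i t ≠ ∅) = Finset.univ := by
        apply Finset.filter_true_of_mem
        intro t _
        rw [hS]
        split <;> simp
      rw [this, Finset.card_univ, Fintype.card_fin]
    have hone : ∀ i : Fin n, 1 ≤ util S i o := by
      intro i
      have := hpr i
      rwa [hmu i, Nat.div_self hn0] at this
    set Z : Finset (Fin n) := Finset.univ.filter (fun t => ((o t : ℕ)) = 0) with hZ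
    set Zc : Finset (Fin n) := Finset.univ.filter (fun t => ¬ ((o t : ℕ)) = 0) with hZc
    have hZZc : Z.card + Zc.card = n := by
      rw [hZ, hZc, Finset.card_filter_add_card_filter_not, Finset.card_univ,
        Fintype.card_fin]
    -- every nonzero project is hit, so Zc has at least n-k elements
    have himg : Finset.univ.filter (fun p : Fin (n - k + 1) => (p : ℕ) ≠ 0) ⊆ Zc.image o := by
      intro p hp
      simp only [Finset.mem_filter, Finset.mem_univ, true_and] at hp
      have hplt : (p : ℕ) - 1 < n - k := by
        have := p.isLt
        omega
      set i : Fin n := ⟨(p : ℕ) - 1, by omega⟩ with hi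
      have htgti : tgt i = p := by
        rw [htgt]
        simp only [hi]
        rw [dif_pos hplt]
        apply Fin.ext
        simp
        omega
      have h1 := hone i
      rw [hutil] at h1
      obtain ⟨t, ht⟩ := Finset.card_pos.mp (lt_of_lt_of_le Nat.zero_lt_one h1)
      simp only [Finset.mem_filter, Finset.mem_univ, true_and] at ht
      rw [htgti] at ht
      apply Finset.mem_image.mpr
      exact ⟨t, by simp [hZc, ht]; exact fun h => hp (by rw [h]; rfl), ht⟩
    have hcard_nz : (Finset.univ.filter (fun p : Fin (n - k + 1) => (p : ℕ) ≠ 0)).card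
        = n - k := by
      rw [Finset.card_filter,
        Fin.sum_univ_eq_sum_range (fun j => if j ≠ 0 then 1 else 0) (n - k + 1),
        ← Finset.card_filter]
      have h2 : (Finset.range (n - k + 1)).filter (fun i => i ≠ 0)
          = Finset.Ico 1 (n - k + 1) := by
        ext a
        simp only [Finset.mem_filter, Finset.mem_range, Finset.mem_Ico]
        omega
      rw [h2, Nat.card_Ico]
      omega
    have hZc_ge : n - k ≤ Zc.card := by
      calc n - k = (Finset.univ.filter (fun p : Fin (n - k + 1) => (p : ℕ) ≠ 0)).card :=
            hcard_nz.symm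
        _ ≤ (Zc.image o).card := Finset.card_le_card himg
        _ ≤ Zc.card := Finset.card_image_le
    have hZle : Z.card ≤ k := by omega
    rw [hsum' o]
    rw [← Finset.sum_filter_add_sum_filter_not Finset.univ (fun t => ((o t : ℕ)) = 0)]
    have e1 : ∑ t ∈ Finset.univ.filter (fun t => ((o t : ℕ)) = 0),
        (if ((o t : ℕ)) = 0 then k else 1) = Z.card * k := by
      rw [Finset.sum_congr rfl (fun t ht => ?_), Finset.sum_const, smul_eq_mul, hZ]
      rw [if_pos (Finset.mem_filter.mp ht).2]
    have e2 : ∑ t ∈ Finset.univ.filter (fun t => ¬ ((o t : ℕ)) = 0),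
        (if ((o t : ℕ)) = 0 then k else 1) = Zc.card := by
      rw [Finset.sum_congr rfl (fun t ht => ?_), Finset.sum_const, smul_eq_mul, mul_one, hZc]
      rw [if_neg (Finset.mem_filter.mp ht).2]
    rw [e1, e2]
    have hZq : (Z.card : ℤ) + Zc.card = n := by exact_mod_cast hZZc
    have hZleq : (Z.card : ℤ) ≤ k := by exact_mod_cast hZle
    have hkq : (2 : ℤ) ≤ (k : ℤ) := by exact_mod_cast hk
    zify [hkn]
    nlinarith [mul_nonneg (sub_nonneg.mpr hZleq) (by linarith : (0:ℤ) ≤ (k:ℤ) - 1)]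
  · -- (c) the ratio
    have hcast : ((n - k + k * k : ℕ) : ℚ) = (n : ℚ) - k + k * k := by
      push_cast [Nat.cast_sub hkn]
      ring
    have hnq : (n : ℚ) = (k : ℚ) * k := by exact_mod_cast congrArg (Nat.cast : ℕ → ℚ) hn
    have hk2 : (2 : ℚ) ≤ (k : ℚ) := by exact_mod_cast hk
    have hd1 : (n : ℚ) - k + k * k ≠ 0 := by nlinarith
    have hd2 : (2 : ℚ) * k - 1 ≠ 0 := by nlinarith
    rw [hcast, div_eq_div_iff hd1 hd2, hnq]
    ring
end

section
/- In the CP setting with n = ℓ, the two-stage greedy construction yields: if U ≥ s·k, s ≥ 1, s ≤ k, k ≤ n, then (U + s(n−k))/(U + (n−k)) ≤ n/(2√n − 1). -/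
/-!
The map `x ↦ (x + A) / (x + B)` is antitone when `A ≥ B`, so the worst case is `U = s k`,
where the ratio equals `s n / (k (s - 1) + n) ≤ s n / (s (s - 1) + n)`. The last bound is at most
`n / (2 √n - 1)` by AM-GM in the form `2 s √n ≤ s² + n`.
-/

open Real

lemma add_div_add_le_add_div_add {α : Type*} [Field α] [LinearOrder α] [IsStrictOrderedRing α]
    {x y A B : α} (hyB : 0 < y + B) (hBA : B ≤ A) (hyx : y ≤ x) :
    (x + A) / (x + B) ≤ (y + A) / (y + B) := by
  rw [div_le_div_iff₀ (by linarith) hyB]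
  nlinarith [mul_nonneg (sub_nonneg.2 hyx) (sub_nonneg.2 hBA)]

lemma mul_div_mul_sub_one_add_le_div_two_sqrt_sub_one {s n : ℝ} (hn : 0 < 2 * √n - 1) :
    s * n / (s * (s - 1) + n) ≤ n / (2 * √n - 1) := by
  have hn_pos : 0 < n := Real.sqrt_pos.1 (by linarith)
  have am_gm : 2 * s * √n ≤ s ^ 2 + n := by
    simpa [Real.sq_sqrt hn_pos.le] using two_mul_le_add_sq s √n
  have hden : 0 < s * (s - 1) + n := by nlinarith
  rw [div_le_div_iff₀ hden hn]
  nlinarith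

/-- Two-stage greedy bound in the CP setting with `n = ℓ`: if `1 ≤ s ≤ k ≤ n` and
`U ≥ s·k`, then `(U + s(n−k))/(U + (n−k)) ≤ n/(2√n − 1)`. -/
theorem greedy_ratio_bound (U s k n : ℝ) (hs : 1 ≤ s) (hsk : s ≤ k) (hkn : k ≤ n)
    (hU : s * k ≤ U) :
    (U + s * (n - k)) / (U + (n - k)) ≤ n / (2 * Real.sqrt n - 1) := by
  have hn : 1 ≤ n := hs.trans (hsk.trans hkn)
  have hsqrt : 1 ≤ √n := Real.one_le_sqrt.2 hn
  have hnk : 0 ≤ n - k := by linarith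
  calc (U + s * (n - k)) / (U + (n - k))
      ≤ (s * k + s * (n - k)) / (s * k + (n - k)) :=
        add_div_add_le_add_div_add (by nlinarith) (le_mul_of_one_le_left hnk hs) hU
    _ = s * n / (k * (s - 1) + n) := by ring_nf
    _ ≤ s * n / (s * (s - 1) + n) :=
        div_le_div_of_nonneg_left (by positivity) (by nlinarith)
          (by nlinarith [mul_le_mul_of_nonneg_right hsk (sub_nonneg.2 hs)])
    _ ≤ n / (2 * √n - 1) := mul_div_mul_sub_one_add_le_div_two_sqrt_sub_one (by linarith)
end

section
/- The mechanism that at each timestep selects a project with the highest number of approvals (breaking ties by a fixed linear order on projects) is strategyproof: no agent can strictly increase her utility (measured by her true approval sets) by reporting different approval sets. -/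
/-- The number of reported approvals that project `p` receives at timestep `t`
under the reported profile `B`. -/
noncomputable def score {P : Type*} {n ℓ : ℕ}
    (B : Fin n → Fin ℓ → Finset P) (t : Fin ℓ) (p : P) : ℕ :=
  Nat.card {i : Fin n // p ∈ B i t}

/-- GreedyUtil: at each timestep, select a project with the highest number of
reported approvals, breaking ties by the fixed linear order on projects. -/
noncomputable def greedy {P : Type*} [Fintype P] [Nonempty P] [LinearOrder P]
    {n ℓ : ℕ} (B : Fin n → Fin ℓ → Finset P) (t : Fin ℓ) : P :=
  (Finset.univ.filter (fun p => ∀ q, score B t q ≤ score B t p)).min' (by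
    classical
    obtain ⟨p, -, hp⟩ :=
      Finset.exists_max_image (Finset.univ : Finset P) (score B t) Finset.univ_nonempty
    exact ⟨p, Finset.mem_filter.2 ⟨Finset.mem_univ _, fun q => hp q (Finset.mem_univ _)⟩⟩)

open Classical in
/-- Decomposition of the score under an updated profile: the votes of the other
agents plus (possibly) agent `i`'s vote. -/
lemma score_update {P : Type*} {n ℓ : ℕ} (R : Fin n → Fin ℓ → Finset P) (i : Fin n)
    (X : Fin ℓ → Finset P) (t : Fin ℓ) (q : P) :
    score (Function.update R i X) t q =
      ((Finset.univ.erase i).filter (fun j => q ∈ R j t)).card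
        + (if q ∈ X t then 1 else 0) := by
  classical
  have h1 : score (Function.update R i X) t q =
      (Finset.univ.filter (fun j => q ∈ Function.update R i X j t)).card := by
    rw [score, Nat.card_eq_fintype_card, Fintype.card_subtype]
  rw [h1]
  have huniv : (Finset.univ : Finset (Fin n)) = insert i (Finset.univ.erase i) :=
    (Finset.insert_erase (Finset.mem_univ i)).symm
  conv_lhs => rw [huniv]
  rw [Finset.filter_insert]
  have hfe : (Finset.univ.erase i).filter (fun j => q ∈ Function.update R i X j t)
      = (Finset.univ.erase i).filter (fun j => q ∈ R j t) := by
    apply Finset.filter_congr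
    intro j hj
    rw [Function.update_of_ne (Finset.ne_of_mem_erase hj)]
  rw [hfe, Function.update_self]
  split_ifs with h
  · rw [Finset.card_insert_of_notMem
      (fun hm => (Finset.mem_erase.1 (Finset.mem_filter.1 hm).1).1 rfl)]
  · omega

/-- The greedy winner maximizes the score. -/
lemma greedy_max {P : Type*} [Fintype P] [Nonempty P] [LinearOrder P]
    {n ℓ : ℕ} (B : Fin n → Fin ℓ → Finset P) (t : Fin ℓ) (q : P) :
    score B t q ≤ score B t (greedy B t) := by
  classical
  have := Finset.min'_mem
    (Finset.univ.filter (fun p => ∀ q, score B t q ≤ score B t p)) (by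
      obtain ⟨p, -, hp⟩ :=
        Finset.exists_max_image (Finset.univ : Finset P) (score B t) Finset.univ_nonempty
      exact ⟨p, Finset.mem_filter.2 ⟨Finset.mem_univ _, fun q => hp q (Finset.mem_univ _)⟩⟩)
  exact (Finset.mem_filter.1 this).2 q

/-- The greedy winner is the smallest maximizer. -/
lemma greedy_le {P : Type*} [Fintype P] [Nonempty P] [LinearOrder P]
    {n ℓ : ℕ} (B : Fin n → Fin ℓ → Finset P) (t : Fin ℓ) (q : P)
    (hq : ∀ r, score B t r ≤ score B t q) : greedy B t ≤ q :=
  Finset.min'_le _ _ (Finset.mem_filter.2 ⟨Finset.mem_univ _, hq⟩)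

/-- Per-timestep strategyproofness: if a misreport yields an approved winner,
so does the truthful report. -/
lemma greedy_key {P : Type*} [Fintype P] [Nonempty P] [LinearOrder P]
    {n ℓ : ℕ} (R : Fin n → Fin ℓ → Finset P) (i : Fin n)
    (Bi Si : Fin ℓ → Finset P) (t : Fin ℓ)
    (h : greedy (Function.update R i Bi) t ∈ Si t) :
    greedy (Function.update R i Si) t ∈ Si t := by
  classical
  by_contra hw
  have A := greedy_max (Function.update R i Bi) t (greedy (Function.update R i Si) t)
  have C := greedy_max (Function.update R i Si) t (greedy (Function.update R i Bi) t)
  have e1 : score (Function.update R i Bi) t (greedy (Function.update R i Si) t)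
      = score (Function.update R i Bi) t (greedy (Function.update R i Bi) t) := by
    simp only [score_update] at A C ⊢
    split_ifs at A C ⊢ <;> omega
  have e2 : score (Function.update R i Si) t (greedy (Function.update R i Bi) t)
      = score (Function.update R i Si) t (greedy (Function.update R i Si) t) := by
    simp only [score_update] at A C ⊢
    split_ifs at A C ⊢ <;> omega
  have hple : greedy (Function.update R i Bi) t ≤ greedy (Function.update R i Si) t :=
    greedy_le _ t _ (fun r => e1 ▸ greedy_max (Function.update R i Bi) t r)
  have hwle : greedy (Function.update R i Si) t ≤ greedy (Function.update R i Bi) t :=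
    greedy_le _ t _ (fun r => e2 ▸ greedy_max (Function.update R i Si) t r)
  exact hw (le_antisymm hwle hple ▸ h)

/-- GreedyUtil is strategyproof: fixing the other agents' reports `R`, agent `i`
cannot strictly increase her true utility by reporting `Bi` instead of her true
approval vector `S i`. -/
theorem greedyUtil_strategyproof {P : Type*} [Fintype P] [Nonempty P] [LinearOrder P]
    {n ℓ : ℕ} (S R : Fin n → Fin ℓ → Finset P) (i : Fin n)
    (Bi : Fin ℓ → Finset P) :
    util S i (fun t => greedy (Function.update R i Bi) t) ≤
      util S i (fun t => greedy (Function.update R i (S i)) t) := by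
  classical
  have hu : ∀ o : Fin ℓ → P,
      util S i o = (Finset.univ.filter (fun t => o t ∈ S i t)).card := by
    intro o
    rw [util, Nat.card_eq_fintype_card, Fintype.card_subtype]
  rw [hu, hu]
  apply Finset.card_le_card
  apply Finset.monotone_filter_right
  exact fun t _ ht => greedy_key R i Bi (S i) t ht
end

section
/- No deterministic mechanism that always outputs an egalitarian-welfare-maximizing outcome is strategyproof, even when all agents have singleton approval sets at each timestep: there is a 3-agent, 2-timestep instance on 4 projects witnessing a beneficial manipulation. -/
open Classical in
lemma util_eq {P : Type*} {n : ℕ} (S : Fin n → Fin 2 → Finset P) (i : Fin n) (o : Fin 2 → P) :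
    util S i o = (if o 0 ∈ S i 0 then 1 else 0) + (if o 1 ∈ S i 1 then 1 else 0) := by
  classical
  rw [util, Nat.card_eq_fintype_card, Fintype.card_subtype]
  rw [show (Finset.univ : Finset (Fin 2)) = {0, 1} by decide]
  rw [Finset.filter_insert, Finset.filter_singleton]
  split_ifs <;> simp_all


/-- No deterministic mechanism that always outputs an egalitarian-welfare
maximizing outcome is strategyproof, even with singleton approval sets: in the
instance with 3 agents, 2 timesteps and 4 projects where every agent approves
`p1` at timestep 1 and agent `i` approves `p_i` at timestep 2, some agent has a
beneficial misreport. -/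
theorem egal_not_strategyproof
    (M : (Fin 3 → Fin 2 → Finset (Fin 4)) → (Fin 2 → Fin 4))
    (hM : ∀ (S : Fin 3 → Fin 2 → Finset (Fin 4)) (o' : Fin 2 → Fin 4),
      Finset.univ.inf' ⟨0, Finset.mem_univ 0⟩ (fun j => util S j o') ≤
        Finset.univ.inf' ⟨0, Finset.mem_univ 0⟩ (fun j => util S j (M S)))
    (S : Fin 3 → Fin 2 → Finset (Fin 4))
    (hS : ∀ i : Fin 3, S i 0 = {0} ∧ S i 1 = {⟨(i : ℕ), by omega⟩}) :
    ∃ (i : Fin 3) (B : Fin 2 → Finset (Fin 4)),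
      util S i (M S) < util S i (M (Function.update S i B)) := by
  classical
  have egal_ge : ∀ (S' : Fin 3 → Fin 2 → Finset (Fin 4)) (o' : Fin 2 → Fin 4),
      (∀ j, 1 ≤ util S' j o') → ∀ j, 1 ≤ util S' j (M S') := by
    intro S' o' h j
    calc (1:ℕ) ≤ Finset.univ.inf' ⟨0, Finset.mem_univ 0⟩ (fun j => util S' j o') :=
          Finset.le_inf' _ _ (fun j _ => h j)
      _ ≤ Finset.univ.inf' ⟨0, Finset.mem_univ 0⟩ (fun j => util S' j (M S')) := hM S' o'
      _ ≤ util S' j (M S') := Finset.inf'_le _ (Finset.mem_univ j)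
  have hS0 : ∀ i : Fin 3, S i 0 = {0} := fun i => (hS i).1
  have hS1 : ∀ i : Fin 3, S i 1 = {⟨(i : ℕ), by omega⟩} := fun i => (hS i).2
  -- all utilities under M S are at least 1
  have key : ∀ j, 1 ≤ util S j (M S) := by
    apply egal_ge S (fun _ => (0 : Fin 4))
    intro j
    rw [util_eq, hS0]
    simp
  -- M S selects project 0 at timestep 0
  have hMS0 : M S 0 = 0 := by
    by_contra h
    have f1 := key 1
    have f2 := key 2
    rw [util_eq, hS0, hS1] at f1 f2
    simp only [Finset.mem_singleton] at f1 f2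
    rw [if_neg h] at f1 f2
    have g1 : M S 1 = ⟨((1 : Fin 3) : ℕ), by omega⟩ := by
      by_contra hx; rw [if_neg hx] at f1; omega
    have g2 : M S 1 = ⟨((2 : Fin 3) : ℕ), by omega⟩ := by
      by_contra hx; rw [if_neg hx] at f2; omega
    rw [g1, Fin.ext_iff] at g2
    simp at g2
  -- choose an agent whose t=1 project differs from M S 1
  obtain ⟨i, hi⟩ : ∃ i : Fin 3, M S 1 ≠ (⟨(i : ℕ), by omega⟩ : Fin 4) := by
    by_cases h : M S 1 = (0 : Fin 4)
    · refine ⟨1, ?_⟩; rw [h, Ne, Fin.ext_iff]; simp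
    · refine ⟨0, ?_⟩; rw [Ne, Fin.ext_iff]; exact fun hx => h (Fin.ext hx)
  set B : Fin 2 → Finset (Fin 4) :=
    (fun t => if t = 0 then {3} else {⟨(i : ℕ), by omega⟩}) with hB
  refine ⟨i, B, ?_⟩
  set S' := Function.update S i B with hS'
  have hS'i : S' i = B := Function.update_self i B S
  have hS'j : ∀ j : Fin 3, j ≠ i → S' j = S j := fun j hj => Function.update_of_ne hj B S
  have hB0 : B 0 = {3} := by simp [hB]
  have hB1 : B 1 = {⟨(i : ℕ), by omega⟩} := by simp [hB]
  -- all utilities under M S' are at least 1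
  have hall : ∀ j, 1 ≤ util S' j (M S') := by
    apply egal_ge S' (fun t => if t = 0 then (0 : Fin 4) else ⟨(i : ℕ), by omega⟩)
    intro j
    by_cases hj : j = i
    · subst hj
      rw [util_eq, hS'i, hB0, hB1]
      simp
    · rw [util_eq, hS'j j hj, hS0]
      simp
  -- M S' selects project 0 at timestep 0
  have h0' : M S' 0 = 0 := by
    by_contra h
    have hforce : ∀ j : Fin 3, j ≠ i → M S' 1 = (⟨(j : ℕ), by omega⟩ : Fin 4) := by
      intro j hj
      have f := hall j
      rw [util_eq, hS'j j hj, hS0, hS1] at f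
      simp only [Finset.mem_singleton] at f
      rw [if_neg h] at f
      by_contra hx; rw [if_neg hx] at f; omega
    have contra : ∀ (a b : Fin 3), a ≠ i → b ≠ i → a ≠ b → False := by
      intro a b ha hb hab
      have ga := hforce a ha
      have gb := hforce b hb
      rw [ga, Fin.ext_iff] at gb
      simp only [Fin.val_ne_of_ne] at gb
      exact hab (Fin.ext gb)
    fin_cases i
    · exact contra 1 2 (by simp [Fin.ext_iff]) (by simp [Fin.ext_iff]) (by simp [Fin.ext_iff])
    · exact contra 0 2 (by simp [Fin.ext_iff]) (by simp [Fin.ext_iff]) (by simp [Fin.ext_iff])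
    · exact contra 0 1 (by simp [Fin.ext_iff]) (by simp [Fin.ext_iff]) (by simp [Fin.ext_iff])
  -- M S' selects agent i's project at timestep 1
  have h1' : M S' 1 = (⟨(i : ℕ), by omega⟩ : Fin 4) := by
    have f := hall i
    rw [util_eq, hS'i, hB0, hB1, h0'] at f
    rw [if_neg (by decide : (0 : Fin 4) ∉ ({3} : Finset (Fin 4)))] at f
    simp only [Finset.mem_singleton] at f
    by_contra hx; rw [if_neg hx] at f; omega
  -- conclude
  have lhs : util S i (M S) = 1 := by
    rw [util_eq, hS0, hS1, hMS0]
    simp [hi]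
  have rhs : util S i (M S') = 2 := by
    rw [util_eq, hS0, hS1, h0', h1']
    simp
  rw [lhs, rhs]
  omega
end

section
/- The reduction from 3-SAT to egalitarian welfare with two projects is correct: a 3-CNF formula F with α variables and κ clauses is satisfiable if and only if the associated temporal election instance (with κ agents, 2 projects, α timesteps) admits an outcome giving every agent utility at least 1. -/
theorem one_le_util_iff {P : Type*} {n ℓ : ℕ} (S : Fin n → Fin ℓ → Finset P) (i : Fin n)
    (o : Fin ℓ → P) : 1 ≤ util S i o ↔ ∃ t, o t ∈ S i t :=
  Finite.card_pos_iff.trans nonempty_subtype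

section Clause

variable {V : Type*} (C : Finset (V × Bool))

def clauseApproval [DecidableEq V] (t : V) : Finset Bool :=
  if (t, true) ∈ C then {true} else if (t, false) ∈ C then {false} else ∅

theorem mem_clauseApproval_iff [DecidableEq V] {t : V}
    (hC : ¬((t, true) ∈ C ∧ (t, false) ∈ C)) (b : Bool) :
    b ∈ clauseApproval C t ↔ (t, b) ∈ C := by
  unfold clauseApproval
  cases b <;> split_ifs <;> simp_all

theorem exists_mem_satisfied_iff (A : V → Bool) :
    (∃ l ∈ C, A l.1 = l.2) ↔ ∃ t, (t, A t) ∈ C :=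
  ⟨fun ⟨l, hl, hl_sat⟩ => ⟨l.1, hl_sat ▸ hl⟩, fun ⟨t, ht⟩ => ⟨(t, A t), ht, rfl⟩⟩

end Clause

/-- Correctness of the 3-SAT reduction: a CNF formula `M` over `α` variables with
`κ` clauses (each clause a set of literals `(variable, polarity)` with no clause
containing a variable with both polarities) is satisfiable iff the associated
temporal election instance — `κ` agents, two projects (`true` = τ, `false` = φ),
`α` timesteps, where agent `i` approves `{τ}` at timestep `t` if `x_t ∈ M_i`,
`{φ}` if `¬x_t ∈ M_i`, and `∅` otherwise — admits an outcome giving every agent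
utility at least 1. -/
theorem threeSat_reduction (α κ : ℕ)
    (M : Fin κ → Finset (Fin α × Bool))
    (hM : ∀ (i : Fin κ) (t : Fin α), ¬((t, true) ∈ M i ∧ (t, false) ∈ M i))
    (S : Fin κ → Fin α → Finset Bool)
    (hS : ∀ (i : Fin κ) (t : Fin α), S i t =
      if (t, true) ∈ M i then {true}
      else if (t, false) ∈ M i then {false} else ∅) :
    (∃ A : Fin α → Bool, ∀ i : Fin κ, ∃ l ∈ M i, A l.1 = l.2) ↔
      (∃ o : Fin α → Bool, ∀ i : Fin κ, 1 ≤ util S i o) := by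
  have satisfied_iff_one_le_util (i : Fin κ) (o : Fin α → Bool) :
      (∃ l ∈ M i, o l.1 = l.2) ↔ 1 ≤ util S i o := by
    rw [one_le_util_iff, exists_mem_satisfied_iff]
    exact exists_congr fun t => by rw [hS, ← clauseApproval, mem_clauseApproval_iff _ (hM i t)]
  simp only [satisfied_iff_one_le_util]
end

section
/- In the utilitarian-plus-proportionality hardness reduction, the welfare structure is as claimed: in the constructed instance I' with 2n agents, 2n timesteps, and projects P ∪ {q_1,…,q_{n+1}}, every project p ∈ P receives exactly n approvals at each timestep t ≤ ℓ, each q_j (j ≤ n+1) receives at most 1 approval at each timestep t ≤ ℓ, and at each timestep t > ℓ the project q_{n+1} receives exactly n approvals while every other project receives at most 1; consequently, an outcome maximizes utilitarian welfare iff it selects a member of P at each t ≤ ℓ and q_{n+1} at each t > ℓ. -/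
open Finset

theorem card_subtype_fin_two_mul {n : ℕ} (q : Fin (2 * n) → Prop) :
    Nat.card {i // q i} =
      Nat.card {j : Fin n // q ⟨j, by omega⟩} + Nat.card {k : Fin n // q ⟨n + k, by omega⟩} := by
  let e : Fin n ⊕ Fin n ≃ Fin (2 * n) := finSumFinEquiv.trans (finCongr (two_mul n).symm)
  rw [← Nat.card_sum]
  exact Nat.card_congr ((e.symm.subtypeEquivOfSubtype' (p := q)).trans Equiv.subtypeSum)

theorem card_subtype_fin_add_lt (n m : ℕ) : Nat.card {k : Fin n // m + k < n} = n - m := by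
  rw [Nat.card_eq_fintype_card, Fintype.card_subtype]
  simp_rw [add_comm m, ← Nat.lt_sub_iff_add_lt, Fin.card_filter_val_lt]
  omega

theorem sum_util_eq_sum_card {P : Type*} {n ℓ : ℕ} (S : Fin n → Fin ℓ → Finset P)
    (o : Fin ℓ → P) : ∑ i, util S i o = ∑ t, Nat.card {i // o t ∈ S i t} := by
  classical
  simp only [util, Nat.card_eq_fintype_card, Fintype.card_subtype, card_filter]
  exact sum_comm

theorem forall_sum_le_iff_forall_eq {ι α M : Type*} [Fintype ι] [AddCommMonoid M] [PartialOrder M]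
    [IsOrderedCancelAddMonoid M] (c : ι → α → M) (m : M) (hc : ∀ t x, c t x ≤ m)
    (hm : ∀ t, ∃ x, c t x = m) (o : ι → α) :
    (∀ o' : ι → α, ∑ t, c t (o' t) ≤ ∑ t, c t (o t)) ↔ ∀ t, c t (o t) = m := by
  choose best hbest using hm
  constructor
  · intro hmax t
    have hsum : ∑ t, c t (o t) = ∑ _t : ι, m :=
      le_antisymm (sum_le_sum fun t _ => hc t _) (by simpa only [hbest] using hmax best)
    exact (sum_eq_sum_iff_of_le fun t _ => hc t (o t)).1 hsum t (mem_univ t)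
  · intro ho o'
    simpa only [ho] using sum_le_sum fun t _ => hc t (o' t)

/-- The approval profile `S'` of `I'`. -/
def reductionApprovals {P : Type*} [Fintype P] [DecidableEq P] {n ℓ : ℕ}
    (S : Fin n → Fin ℓ → Finset P) (napp : P → Fin ℓ → ℕ) (i t : Fin (2 * n)) :
    Finset (P ⊕ Fin (n + 1)) :=
  if ht : (t : ℕ) < ℓ then
    if hi : (i : ℕ) < n then (S ⟨i, hi⟩ ⟨t, ht⟩).image Sum.inl
    else
      insert (Sum.inr (Fin.castSucc ⟨i - n, by omega⟩))
        (({p | napp p ⟨t, ht⟩ ≤ 2 * n - 1 - i} : Finset P).image Sum.inl)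
  else if hi : (i : ℕ) < n then {Sum.inr (Fin.castSucc ⟨i, hi⟩)} else {Sum.inr (Fin.last n)}

section
variable {P : Type*} [Fintype P] [DecidableEq P] {n ℓ : ℕ}
  (S : Fin n → Fin ℓ → Finset P) (napp : P → Fin ℓ → ℕ)

theorem reductionApprovals_left_of_lt (j : Fin n) {t : Fin (2 * n)} (ht : (t : ℕ) < ℓ) :
    reductionApprovals S napp ⟨j, by omega⟩ t = (S j ⟨t, ht⟩).image Sum.inl := by
  simp [reductionApprovals, ht]

theorem reductionApprovals_right_of_lt (k : Fin n) {t : Fin (2 * n)} (ht : (t : ℕ) < ℓ) :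
    reductionApprovals S napp ⟨n + k, by omega⟩ t =
      insert (Sum.inr k.castSucc) (({p | napp p ⟨t, ht⟩ + k < n} : Finset P).image Sum.inl) := by
  have hk := k.isLt
  simp only [reductionApprovals, ht, dif_pos, show ¬ n + (k : ℕ) < n by omega, dif_neg,
    not_false_eq_true, Nat.add_sub_cancel_left]
  congr 3
  ext p
  omega

theorem reductionApprovals_left_of_ge (j : Fin n) {t : Fin (2 * n)} (ht : ℓ ≤ (t : ℕ)) :
    reductionApprovals S napp ⟨j, by omega⟩ t = {Sum.inr j.castSucc} := by
  simp [reductionApprovals, not_lt.2 ht]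

theorem reductionApprovals_right_of_ge (k : Fin n) {t : Fin (2 * n)} (ht : ℓ ≤ (t : ℕ)) :
    reductionApprovals S napp ⟨n + k, by omega⟩ t = {Sum.inr (Fin.last n)} := by
  simp [reductionApprovals, not_lt.2 ht]

theorem card_approvers_inl_of_lt (hnapp : ∀ p t, napp p t = Nat.card {i : Fin n // p ∈ S i t})
    (p : P) {t : Fin (2 * n)} (ht : (t : ℕ) < ℓ) :
    Nat.card {i // Sum.inl p ∈ reductionApprovals S napp i t} = n := by
  rw [card_subtype_fin_two_mul (fun i => Sum.inl p ∈ reductionApprovals S napp i t)]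
  simp only [reductionApprovals_left_of_lt S napp _ ht, reductionApprovals_right_of_lt S napp _ ht,
    Sum.inl_injective.mem_finset_image, mem_insert, reduceCtorEq, false_or, mem_filter_univ]
  rw [← hnapp, card_subtype_fin_add_lt]
  have : napp p ⟨t, ht⟩ ≤ n :=
    (hnapp p _).trans_le ((Finite.card_subtype_le _).trans (Nat.card_fin n).le)
  omega

theorem card_approvers_inr_of_lt_le_one (j : Fin (n + 1)) {t : Fin (2 * n)} (ht : (t : ℕ) < ℓ) :
    Nat.card {i // Sum.inr j ∈ reductionApprovals S napp i t} ≤ 1 := by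
  rw [card_subtype_fin_two_mul (fun i => Sum.inr j ∈ reductionApprovals S napp i t)]
  simp only [reductionApprovals_left_of_lt S napp _ ht, reductionApprovals_right_of_lt S napp _ ht,
    mem_insert, Sum.inr.injEq, mem_image, reduceCtorEq, and_false, exists_false, or_false,
    Nat.card_of_isEmpty, zero_add]
  exact Finite.card_le_one_iff_subsingleton.2
    ⟨fun a b => Subtype.ext (Fin.castSucc_injective _ (a.2.symm.trans b.2))⟩

theorem card_approvers_last_of_ge {t : Fin (2 * n)} (ht : ℓ ≤ (t : ℕ)) :
    Nat.card {i // Sum.inr (Fin.last n) ∈ reductionApprovals S napp i t} = n := by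
  rw [card_subtype_fin_two_mul (fun i => Sum.inr (Fin.last n) ∈ reductionApprovals S napp i t)]
  simp [reductionApprovals_left_of_ge S napp _ ht, reductionApprovals_right_of_ge S napp _ ht,
    (Fin.castSucc_ne_last _).symm]

theorem card_approvers_of_ge_le_one {x : P ⊕ Fin (n + 1)} (hx : x ≠ Sum.inr (Fin.last n))
    {t : Fin (2 * n)} (ht : ℓ ≤ (t : ℕ)) :
    Nat.card {i // x ∈ reductionApprovals S napp i t} ≤ 1 := by
  rw [card_subtype_fin_two_mul (fun i => x ∈ reductionApprovals S napp i t)]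
  simp only [reductionApprovals_left_of_ge S napp _ ht, reductionApprovals_right_of_ge S napp _ ht,
    mem_singleton, hx, Nat.card_of_isEmpty, add_zero]
  exact Finite.card_le_one_iff_subsingleton.2
    ⟨fun a b => Subtype.ext (Fin.castSucc_injective _ (Sum.inr_injective (a.2.symm.trans b.2)))⟩

theorem card_approvers_le (hnapp : ∀ p t, napp p t = Nat.card {i : Fin n // p ∈ S i t})
    (hn : 1 ≤ n) (t : Fin (2 * n)) (x : P ⊕ Fin (n + 1)) :
    Nat.card {i // x ∈ reductionApprovals S napp i t} ≤ n := by
  rcases lt_or_ge (t : ℕ) ℓ with ht | ht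
  · rcases x with p | j
    · exact (card_approvers_inl_of_lt S napp hnapp p ht).le
    · exact (card_approvers_inr_of_lt_le_one S napp j ht).trans hn
  · by_cases hx : x = Sum.inr (Fin.last n)
    · exact hx ▸ (card_approvers_last_of_ge S napp ht).le
    · exact (card_approvers_of_ge_le_one S napp hx ht).trans hn

theorem card_approvers_eq_iff_of_lt (hnapp : ∀ p t, napp p t = Nat.card {i : Fin n // p ∈ S i t})
    (hn : 2 ≤ n) (x : P ⊕ Fin (n + 1)) {t : Fin (2 * n)} (ht : (t : ℕ) < ℓ) :
    Nat.card {i // x ∈ reductionApprovals S napp i t} = n ↔ ∃ p, x = Sum.inl p := by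
  rcases x with p | j
  · exact iff_of_true (card_approvers_inl_of_lt S napp hnapp p ht) ⟨p, rfl⟩
  · have := card_approvers_inr_of_lt_le_one S napp j ht
    simp only [reduceCtorEq, exists_false, iff_false]
    omega

theorem card_approvers_eq_iff_of_ge (hn : 2 ≤ n) (x : P ⊕ Fin (n + 1)) {t : Fin (2 * n)}
    (ht : ℓ ≤ (t : ℕ)) :
    Nat.card {i // x ∈ reductionApprovals S napp i t} = n ↔ x = Sum.inr (Fin.last n) := by
  refine ⟨fun hcard => ?_, fun hx => hx ▸ card_approvers_last_of_ge S napp ht⟩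
  by_contra hx
  have := card_approvers_of_ge_le_one S napp hx ht
  omega

end

/-- Welfare structure of the instance `I'` in the Util-plus-PROP hardness
reduction. Starting from an instance `I` with `n` agents, `ℓ < n` timesteps,
complete preferences, and approval counts `napp p t`, the instance `I'` has `2n`
agents, `2n` timesteps and projects `P ⊕ Fin (n+1)` (with `Sum.inr j` playing
the role of `q_{j+1}`, so `Sum.inr n = q_{n+1}`). Then: (1) at each timestep
`t < ℓ`, each `p ∈ P` is approved by exactly `n` agents; (2) each `q_j` is
approved by at most one agent at each `t < ℓ`; (3) at each `t ≥ ℓ`, `q_{n+1}` is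
approved by exactly `n` agents and every other project by at most one; (4) hence
an outcome maximizes utilitarian welfare iff it selects a member of `P` at every
`t < ℓ` and `q_{n+1}` at every `t ≥ ℓ`. -/
theorem util_prop_reduction_structure {P : Type*} [Fintype P] [DecidableEq P]
    (n ℓ : ℕ) (hℓ : 1 ≤ ℓ) (hn : ℓ < n)
    (S : Fin n → Fin ℓ → Finset P) (hCP : ∀ i t, S i t ≠ ∅)
    (napp : P → Fin ℓ → ℕ)
    (hnapp : ∀ p t, napp p t = Nat.card {i : Fin n // p ∈ S i t})
    (S' : Fin (2 * n) → Fin (2 * n) → Finset (P ⊕ Fin (n + 1)))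
    (hS' : ∀ (i : Fin (2 * n)) (t : Fin (2 * n)), S' i t =
      if ht : (t : ℕ) < ℓ then
        (if hi : (i : ℕ) < n then
          (S ⟨(i : ℕ), hi⟩ ⟨(t : ℕ), ht⟩).image Sum.inl
        else
          insert (Sum.inr ⟨(i : ℕ) - n, by have := i.isLt; omega⟩)
            ((Finset.univ.filter
              (fun p => napp p ⟨(t : ℕ), ht⟩ ≤ 2 * n - 1 - (i : ℕ))).image Sum.inl))
      else
        (if hi : (i : ℕ) < n then {Sum.inr ⟨(i : ℕ), by omega⟩}
         else {Sum.inr ⟨n, by omega⟩})) :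
    (∀ (p : P) (t : Fin (2 * n)), (t : ℕ) < ℓ →
      Nat.card {i : Fin (2 * n) // Sum.inl p ∈ S' i t} = n) ∧
    (∀ (j : Fin (n + 1)) (t : Fin (2 * n)), (t : ℕ) < ℓ →
      Nat.card {i : Fin (2 * n) // Sum.inr j ∈ S' i t} ≤ 1) ∧
    (∀ t : Fin (2 * n), ℓ ≤ (t : ℕ) →
      (Nat.card {i : Fin (2 * n) // Sum.inr (⟨n, by omega⟩ : Fin (n + 1)) ∈ S' i t} = n ∧
       ∀ p' : P ⊕ Fin (n + 1), p' ≠ Sum.inr (⟨n, by omega⟩ : Fin (n + 1)) →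
        Nat.card {i : Fin (2 * n) // p' ∈ S' i t} ≤ 1)) ∧
    (∀ o' : Fin (2 * n) → (P ⊕ Fin (n + 1)),
      ((∀ o'' : Fin (2 * n) → (P ⊕ Fin (n + 1)),
          ∑ i : Fin (2 * n), util S' i o'' ≤ ∑ i : Fin (2 * n), util S' i o') ↔
        (∀ t : Fin (2 * n),
          ((t : ℕ) < ℓ → ∃ p : P, o' t = Sum.inl p) ∧
          (ℓ ≤ (t : ℕ) → o' t = Sum.inr (⟨n, by omega⟩ : Fin (n + 1)))))) := by
  obtain rfl : S' = reductionApprovals S napp := funext fun i => funext (hS' i)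
  have hn2 : 2 ≤ n := by omega
  refine ⟨fun p t ht => card_approvers_inl_of_lt S napp hnapp p ht,
    fun j t ht => card_approvers_inr_of_lt_le_one S napp j ht,
    fun t ht => ⟨card_approvers_last_of_ge S napp ht,
      fun x hx => card_approvers_of_ge_le_one S napp hx ht⟩, fun o => ?_⟩
  have hoptimum : ∀ t, ∃ x, Nat.card {i // x ∈ reductionApprovals S napp i t} = n := by
    intro t
    rcases lt_or_ge (t : ℕ) ℓ with ht | ht
    · obtain ⟨p, -⟩ := nonempty_iff_ne_empty.2 (hCP ⟨0, by omega⟩ ⟨t, ht⟩)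
      exact ⟨Sum.inl p, card_approvers_inl_of_lt S napp hnapp p ht⟩
    · exact ⟨_, card_approvers_last_of_ge S napp ht⟩
  simp only [sum_util_eq_sum_card]
  rw [forall_sum_le_iff_forall_eq _ n (card_approvers_le S napp hnapp (by omega)) hoptimum]
  refine forall_congr' fun t => ?_
  rcases lt_or_ge (t : ℕ) ℓ with ht | ht
  · simp only [ht, not_le.2 ht, true_implies, false_implies, and_true]
    exact card_approvers_eq_iff_of_lt S napp hnapp hn2 (o t) ht
  · simp only [ht, not_lt.2 ht, true_implies, false_implies, true_and]
    exact card_approvers_eq_iff_of_ge S napp hn2 (o t) ht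
end
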